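/- arXiv:1103.5844 — 3 statements merged into one kernel-verified Lean document; each statement's English description precedes it below -/
import Mathlib

section
/- Let (σ_n) be a sequence of finite permutations such that for every fixed permutation τ the sequence t(τ,σ_n) converges, and suppose the lengths |σ_n| do not tend to infinity. Then the sequence (σ_n) is eventually constant: there exist a permutation σ and n_0 such that σ_n = σ for all n ≥ n_0. -/
/-- The number of occurrences of the pattern `τ` in the permutation `π`. -/
noncomputable def patternCount {k n : ℕ} (τ : Equiv.Perm (Fin k)) (π : Equiv.Perm (Fin n)) : ℕ :=
  Nat.card {f : Fin k → Fin n // StrictMono f ∧ ∀ i j : Fin k, τ i < τ j ↔ π (f i) < π (f j)}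

/-- The subpermutation density `t(τ,π) = Λ(τ,π) / C(n,k)` if `k ≤ n`, and `0` otherwise. -/
noncomputable def patternDensity {k n : ℕ} (τ : Equiv.Perm (Fin k)) (π : Equiv.Perm (Fin n)) : ℝ :=
  if k ≤ n then (patternCount τ π : ℝ) / (n.choose k : ℝ) else 0

/- ### Auxiliary lemmas -/

lemma strictMono_fin_self_eq_id {n : ℕ} {f : Fin n → Fin n} (hf : StrictMono f) : f = id := by
  have hsurj : Function.Surjective f :=
    Finite.injective_iff_surjective.mp hf.injective
  have hr : Set.range f = Set.range (id : Fin n → Fin n) := by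
    rw [Set.range_eq_univ.mpr hsurj, Set.range_id]
  haveI : WellFoundedLT (Fin n) := inferInstance
  exact (hf.range_inj strictMono_id).1 hr

/-- Uniqueness of the pattern of a tuple. -/
lemma pattern_unique {k n : ℕ} {g : Fin k → Fin n} {τ₁ τ₂ : Equiv.Perm (Fin k)}
    (h₁ : ∀ i j, τ₁ i < τ₁ j ↔ g i < g j) (h₂ : ∀ i j, τ₂ i < τ₂ j ↔ g i < g j) :
    τ₁ = τ₂ := by
  have hmono : StrictMono (fun i => τ₂ (τ₁.symm i)) := by
    intro a b hab
    have := (h₁ (τ₁.symm a) (τ₁.symm b)).mp (by simpa using hab)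
    exact (h₂ _ _).mpr this
  have hid := strictMono_fin_self_eq_id hmono
  apply Equiv.ext
  intro i
  have h3 : τ₂ (τ₁.symm (τ₁ i)) = id (τ₁ i) := congrFun hid (τ₁ i)
  simpa using h3.symm

/-- Existence of the pattern of an injective tuple. -/
lemma pattern_exists {k n : ℕ} (g : Fin k → Fin n) (hg : Function.Injective g) :
    ∃ τ : Equiv.Perm (Fin k), ∀ i j, τ i < τ j ↔ g i < g j := by
  refine ⟨(Tuple.sort g)⁻¹, fun i j => ?_⟩
  have hsm : StrictMono (g ∘ Tuple.sort g) :=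
    (Tuple.monotone_sort g).strictMono_of_injective (hg.comp (Tuple.sort g).injective)
  have h1 : g i = (g ∘ Tuple.sort g) ((Tuple.sort g)⁻¹ i) := by simp
  have h2 : g j = (g ∘ Tuple.sort g) ((Tuple.sort g)⁻¹ j) := by simp
  rw [h1, h2]
  exact (hsm.lt_iff_lt).symm

lemma patternCount_same_size {n : ℕ} (τ π : Equiv.Perm (Fin n)) :
    patternCount τ π = if τ = π then 1 else 0 := by
  unfold patternCount
  by_cases h : τ = π
  · subst h
    rw [if_pos rfl, Nat.card_eq_one_iff_unique]
    constructor
    · constructor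
      rintro ⟨f, hf, -⟩ ⟨f', hf', -⟩
      exact Subtype.ext ((strictMono_fin_self_eq_id hf).trans
        (strictMono_fin_self_eq_id hf').symm)
    · exact ⟨⟨id, strictMono_id, fun i j => Iff.rfl⟩⟩
  · rw [if_neg h]
    have : IsEmpty {f : Fin n → Fin n // StrictMono f ∧
        ∀ i j : Fin n, τ i < τ j ↔ π (f i) < π (f j)} := by
      constructor
      rintro ⟨f, hf, hpat⟩
      apply h
      have hfid := strictMono_fin_self_eq_id hf
      subst hfid
      exact pattern_unique (g := fun i => π i) hpat (fun i j => Iff.rfl)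
    exact Nat.card_of_isEmpty

lemma nat_card_sigma {ι : Type*} [Fintype ι] (f : ι → Type*) [∀ i, Finite (f i)] :
    Nat.card (Σ i, f i) = ∑ i, Nat.card (f i) := by
  classical
  letI : ∀ i, Fintype (f i) := fun i => Fintype.ofFinite _
  simp [Nat.card_eq_fintype_card, Fintype.card_sigma]

/-- The equivalence between strictly monotone maps and `k`-subsets. -/
noncomputable def strictMonoEquivFinset (k n : ℕ) :
    {f : Fin k → Fin n // StrictMono f} ≃ {s : Finset (Fin n) // s.card = k} where
  toFun := fun ⟨f, hf⟩ => ⟨Finset.univ.image f, by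
    rw [Finset.card_image_of_injective _ hf.injective, Finset.card_univ, Fintype.card_fin]⟩
  invFun := fun ⟨s, hs⟩ => ⟨s.orderEmbOfFin hs, (s.orderEmbOfFin hs).strictMono⟩
  left_inv := by
    rintro ⟨f, hf⟩
    exact Subtype.ext (Finset.orderEmbOfFin_unique _
      (fun x => Finset.mem_image_of_mem f (Finset.mem_univ x)) hf).symm
  right_inv := by
    rintro ⟨s, hs⟩
    apply Subtype.ext
    rw [← Finset.coe_inj, Finset.coe_image, Finset.coe_univ, Set.image_univ]
    exact Finset.range_orderEmbOfFin s hs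

lemma sum_patternCount {k n : ℕ} (π : Equiv.Perm (Fin n)) :
    ∑ τ : Equiv.Perm (Fin k), patternCount τ π = n.choose k := by
  classical
  unfold patternCount
  rw [← nat_card_sigma]
  have hbij : Function.Bijective
      (fun x : (Σ τ : Equiv.Perm (Fin k), {f : Fin k → Fin n // StrictMono f ∧
          ∀ i j : Fin k, τ i < τ j ↔ π (f i) < π (f j)}) =>
        (⟨x.2.1, x.2.2.1⟩ : {f : Fin k → Fin n // StrictMono f})) := by
    constructor
    · rintro ⟨τ₁, f₁, hf₁, hp₁⟩ ⟨τ₂, f₂, hf₂, hp₂⟩ h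
      simp only [Subtype.mk.injEq] at h
      subst h
      have : τ₁ = τ₂ := pattern_unique (g := fun i => π (f₁ i)) hp₁ hp₂
      subst this
      simp only [Sigma.mk.inj_iff, heq_eq_eq, true_and]
    · rintro ⟨f, hf⟩
      obtain ⟨τ, hτ⟩ := pattern_exists (fun i => π (f i))
        ((Equiv.injective π).comp hf.injective)
      exact ⟨⟨τ, f, hf, hτ⟩, rfl⟩
  rw [Nat.card_eq_of_bijective _ hbij, Nat.card_congr (strictMonoEquivFinset k n),
    Nat.card_eq_fintype_card, Fintype.card_finset_len, Fintype.card_fin]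

lemma sum_patternDensity {k n : ℕ} (hk : k ≤ n) (π : Equiv.Perm (Fin n)) :
    ∑ τ : Equiv.Perm (Fin k), patternDensity τ π = 1 := by
  unfold patternDensity
  simp only [if_pos hk]
  rw [← Finset.sum_div, ← Nat.cast_sum, sum_patternCount]
  exact div_self (by exact_mod_cast (Nat.choose_pos hk).ne')

lemma patternDensity_nonneg {k n : ℕ} (τ : Equiv.Perm (Fin k)) (π : Equiv.Perm (Fin n)) :
    0 ≤ patternDensity τ π := by
  unfold patternDensity
  split
  · positivity
  · norm_num

lemma patternDensity_le_one {k n : ℕ} (τ : Equiv.Perm (Fin k)) (π : Equiv.Perm (Fin n)) :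
    patternDensity τ π ≤ 1 := by
  by_cases hk : k ≤ n
  · calc patternDensity τ π ≤ ∑ τ' : Equiv.Perm (Fin k), patternDensity τ' π :=
        Finset.single_le_sum (fun τ' _ => patternDensity_nonneg τ' π) (Finset.mem_univ τ)
    _ = 1 := sum_patternDensity hk π
  · unfold patternDensity
    rw [if_neg hk]
    norm_num

lemma patternDensity_self {n : ℕ} (π : Equiv.Perm (Fin n)) :
    patternDensity π π = 1 := by
  unfold patternDensity
  rw [if_pos le_rfl, patternCount_same_size, if_pos rfl, Nat.choose_self]
  norm_num

lemma patternDensity_ne_same_size {n : ℕ} {τ π : Equiv.Perm (Fin n)} (h : τ ≠ π) :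
    patternDensity τ π = 0 := by
  unfold patternDensity
  rw [if_pos le_rfl, patternCount_same_size, if_neg h]
  norm_num

lemma patternDensity_of_lt {k n : ℕ} (h : n < k) (τ : Equiv.Perm (Fin k))
    (π : Equiv.Perm (Fin n)) : patternDensity τ π = 0 := by
  unfold patternDensity
  rw [if_neg (by omega)]

/-- A convergent permutation sequence whose lengths do not tend to infinity is
eventually constant. -/
theorem eventually_constant_of_convergent_of_not_tendsto_atTop
    (σ : ℕ → Σ n : ℕ, Equiv.Perm (Fin n))
    (hconv : ∀ (k : ℕ) (τ : Equiv.Perm (Fin k)),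
      ∃ L : ℝ, Filter.Tendsto (fun n => patternDensity τ (σ n).2) Filter.atTop (nhds L))
    (hlen : ¬ Filter.Tendsto (fun n => (σ n).1) Filter.atTop Filter.atTop) :
    ∃ (σ₀ : Σ n : ℕ, Equiv.Perm (Fin n)) (n₀ : ℕ), ∀ n ≥ n₀, σ n = σ₀ := by
  classical
  -- extract a bound `b` attained infinitely often
  rw [Filter.tendsto_atTop_atTop] at hlen
  push_neg at hlen
  obtain ⟨b, hb⟩ := hlen
  -- the set of small indices is infinite
  have hinf : {n : ℕ | (σ n).1 < b}.Infinite := by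
    rw [← Nat.frequently_atTop_iff_infinite, Filter.frequently_atTop]
    intro a
    obtain ⟨n, hn, hlt⟩ := hb a
    exact ⟨n, hn, hlt⟩
  haveI : Infinite {n : ℕ // (σ n).1 < b} := hinf.to_subtype
  -- pigeonhole onto a finite type
  obtain ⟨⟨mfin, π₀⟩, hfib⟩ := Finite.exists_infinite_fiber
    (fun x : {n : ℕ // (σ n).1 < b} =>
      (⟨⟨(σ x.1).1, x.2⟩, (σ x.1).2⟩ : Σ i : Fin b, Equiv.Perm (Fin i)))
  set σ₀ : Σ n : ℕ, Equiv.Perm (Fin n) := ⟨(mfin : ℕ), π₀⟩ with hσ₀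
  -- infinitely many n with σ n = σ₀
  have hfreq : ∃ᶠ n in Filter.atTop, σ n = σ₀ := by
    rw [Nat.frequently_atTop_iff_infinite]
    have himg : Set.Infinite (Subtype.val '' ((fun x : {n : ℕ // (σ n).1 < b} =>
        (⟨⟨(σ x.1).1, x.2⟩, (σ x.1).2⟩ : Σ i : Fin b, Equiv.Perm (Fin i))) ⁻¹'
          {⟨mfin, π₀⟩})) :=
      ((Set.infinite_coe_iff.mp hfib).image (Subtype.val_injective.injOn))
    refine himg.mono ?_
    rintro n ⟨⟨n', hn'⟩, hmem, rfl⟩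
    simp only [Set.mem_preimage, Set.mem_singleton_iff] at hmem
    rw [Sigma.mk.inj_iff] at hmem
    have h1 : (σ n').1 = (mfin : ℕ) := congrArg Fin.val hmem.1
    exact Sigma.ext h1 hmem.2
  -- the density of σ₀ in σ n tends to 1
  obtain ⟨L, hL⟩ := hconv (mfin : ℕ) π₀
  have hL1 : L = 1 := by
    refine tendsto_nhds_unique_of_frequently_eq hL tendsto_const_nhds ?_
    refine hfreq.mono fun n hn => ?_
    show patternDensity π₀ (σ n).2 = 1
    rw [hn]
    exact patternDensity_self π₀
  rw [hL1] at hL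
  -- densities of all patterns of size (mfin : ℕ)+1 tend to 0
  have hzero : ∀ τ : Equiv.Perm (Fin ((mfin : ℕ) + 1)),
      Filter.Tendsto (fun n => patternDensity τ (σ n).2) Filter.atTop (nhds 0) := by
    intro τ
    obtain ⟨Lτ, hLτ⟩ := hconv ((mfin : ℕ) + 1) τ
    have h0 : Lτ = 0 := by
      refine tendsto_nhds_unique_of_frequently_eq hLτ tendsto_const_nhds ?_
      refine hfreq.mono fun n hn => ?_
      show patternDensity τ (σ n).2 = 0
      rw [hn]
      exact patternDensity_of_lt (Nat.lt_succ_self (mfin : ℕ)) τ π₀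
    rwa [h0] at hLτ
  -- the test function tends to 1
  have hg : Filter.Tendsto (fun n => patternDensity π₀ (σ n).2 -
      ∑ τ : Equiv.Perm (Fin ((mfin : ℕ) + 1)), patternDensity τ (σ n).2) Filter.atTop (nhds 1) := by
    have hsum : Filter.Tendsto
        (fun n => ∑ τ : Equiv.Perm (Fin ((mfin : ℕ) + 1)), patternDensity τ (σ n).2)
        Filter.atTop (nhds 0) := by
      have := tendsto_finset_sum (Finset.univ : Finset (Equiv.Perm (Fin ((mfin : ℕ) + 1))))
        (fun τ _ => hzero τ)
      simpa using this
    simpa using hL.sub hsum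
  have hev : ∀ᶠ n in Filter.atTop, (1 / 2 : ℝ) < patternDensity π₀ (σ n).2 -
      ∑ τ : Equiv.Perm (Fin ((mfin : ℕ) + 1)), patternDensity τ (σ n).2 :=
    hg.eventually (eventually_gt_nhds (by norm_num))
  have hev' : ∀ᶠ n in Filter.atTop, σ n = σ₀ := by
    refine hev.mono fun n hn => ?_
    by_cases hlen' : (mfin : ℕ) + 1 ≤ (σ n).1
    · exfalso
      rw [sum_patternDensity hlen' (σ n).2] at hn
      have := patternDensity_le_one π₀ (σ n).2
      linarith
    · push_neg at hlen'
      have hsum0 : ∑ τ : Equiv.Perm (Fin ((mfin : ℕ) + 1)), patternDensity τ (σ n).2 = 0 :=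
        Finset.sum_eq_zero fun τ _ => patternDensity_of_lt (by omega) τ (σ n).2
      rw [hsum0, sub_zero] at hn
      rcases hsn : σ n with ⟨l, π⟩
      rw [hsn] at hn hlen'
      simp only at hn hlen'
      have hlm : l = (mfin : ℕ) := by
        by_contra hne
        have hlt : l < (mfin : ℕ) := by omega
        rw [patternDensity_of_lt hlt π₀ π] at hn
        linarith
      subst hlm
      have hπ : π₀ = π := by
        by_contra hne
        rw [patternDensity_ne_same_size hne] at hn
        linarith
      rw [hσ₀, hπ]
  obtain ⟨n₀, hn₀⟩ := hev'.exists_forall_of_atTop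
  exact ⟨σ₀, n₀, hn₀⟩
end

section
/- Let μ_n and μ be probability measures on [0,1]² with joint distribution functions F_n and F, and suppose each μ_n has uniform marginals. If μ_n converges weakly to μ, then sup_{x,y∈[0,1]} |F_n(x,y) − F(x,y)| → 0 (i.e., pointwise weak convergence upgrades to uniform convergence of distribution functions). -/
/-!
Uniform marginals make every `Fₙ` Lipschitz: the symmetric difference of two quadrants lies in a
vertical strip and a horizontal strip, whose masses are bounded by their widths. The bound
`μₙ.map fst ≤ volume` passes to the weak limit (open sets by the portmanteau theorem, all sets
by outer regularity of Lebesgue measure), so the lines bounding a quadrant are `μ`-null and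
`Fₙ → F` pointwise. An equicontinuous sequence converging pointwise converges uniformly on
compact sets.
-/

open MeasureTheory Filter Set Topology
open scoped symmDiff

theorem Set.prod_symmDiff_prod_subset {α β : Type*} (s₁ s₂ : Set α) (t₁ t₂ : Set β) :
    (s₁ ×ˢ t₁) ∆ (s₂ ×ˢ t₂) ⊆ Prod.fst ⁻¹' (s₁ ∆ s₂) ∪ Prod.snd ⁻¹' (t₁ ∆ t₂) := by
  rintro ⟨x, y⟩
  simp only [mem_symmDiff, mem_prod, mem_union, mem_preimage]
  tauto

theorem Set.Iic_symmDiff_Iic {α : Type*} [LinearOrder α] (a b : α) :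
    Iic a ∆ Iic b = uIoc a b := by
  ext x
  simp only [mem_symmDiff, mem_Iic, uIoc_eq_union, mem_union, mem_Ioc]
  grind

theorem IsCompact.tendstoUniformlyOn_of_equicontinuousOn {ι X α : Type*} [TopologicalSpace X]
    [UniformSpace α] {F : ι → X → α} {f : X → α} {p : Filter ι} {K : Set X} (hK : IsCompact K)
    (hF : EquicontinuousOn F K) (hlim : ∀ x ∈ K, Tendsto (F · x) p (𝓝 (f x))) :
    TendstoUniformlyOn F f p K := by
  have := (EquicontinuousOn.tendsto_uniformOnFun_iff_pi' (𝔖 := {K}) (by simpa using hK)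
    (by simpa using hF) p f).2 ?_
  · exact UniformOnFun.tendsto_iff_tendstoUniformlyOn.1 this K rfl
  · rw [tendsto_pi_nhds]
    simpa using hlim

namespace MeasureTheory.ProbabilityMeasure

variable {Ω ι : Type*} [MeasurableSpace Ω] [TopologicalSpace Ω] [OpensMeasurableSpace Ω]
  {L : Filter ι} [L.NeBot] {μs : ι → ProbabilityMeasure Ω} {μ : ProbabilityMeasure Ω}

theorem le_of_tendsto_of_forall_le [HasOuterApproxClosed Ω] (hlim : Tendsto μs L (𝓝 μ))
    {ρ : Measure Ω} [ρ.OuterRegular] (hle : ∀ i, (μs i : Measure Ω) ≤ ρ) :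
    (μ : Measure Ω) ≤ ρ := by
  intro s
  rw [s.measure_eq_iInf_isOpen ρ]
  refine le_iInf₂ fun U hsU => le_iInf fun hU => ?_
  calc (μ : Measure Ω) s ≤ (μ : Measure Ω) U := measure_mono hsU
    _ ≤ L.liminf fun i => (μs i : Measure Ω) U := le_liminf_measure_open_of_tendsto hlim hU
    _ ≤ ρ U := liminf_le_of_frequently_le' (Frequently.of_forall fun i => hle i U)

theorem map_le_of_tendsto_of_forall_map_le {Ω' : Type*} [MeasurableSpace Ω']
    [TopologicalSpace Ω'] [BorelSpace Ω'] [HasOuterApproxClosed Ω'] (hlim : Tendsto μs L (𝓝 μ))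
    {f : Ω → Ω'} (hf : Continuous f) {ρ : Measure Ω'} [ρ.OuterRegular]
    (hle : ∀ i, (μs i : Measure Ω).map f ≤ ρ) : (μ : Measure Ω).map f ≤ ρ := by
  simpa using le_of_tendsto_of_forall_le ((continuous_map hf).continuousAt.tendsto.comp hlim) hle

end MeasureTheory.ProbabilityMeasure

def jointCDF (ν : Measure (ℝ × ℝ)) (p : ℝ × ℝ) : ℝ := ν.real (Iic p.1 ×ˢ Iic p.2)

section jointCDF

variable {ν : Measure (ℝ × ℝ)}

theorem dist_jointCDF_le [IsFiniteMeasure ν] (hfst : ν.map Prod.fst ≤ volume)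
    (hsnd : ν.map Prod.snd ≤ volume) (p q : ℝ × ℝ) :
    dist (jointCDF ν p) (jointCDF ν q) ≤ dist p.1 q.1 + dist p.2 q.2 := by
  have hstrips : ν ((Iic p.1 ×ˢ Iic p.2) ∆ (Iic q.1 ×ˢ Iic q.2)) ≤
      ENNReal.ofReal (dist p.1 q.1) + ENNReal.ofReal (dist p.2 q.2) :=
    calc _ ≤ ν (Prod.fst ⁻¹' uIoc p.1 q.1) + ν (Prod.snd ⁻¹' uIoc p.2 q.2) := by
          refine (measure_mono ?_).trans (measure_union_le _ _)
          rw [← Iic_symmDiff_Iic, ← Iic_symmDiff_Iic]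
          exact prod_symmDiff_prod_subset _ _ _ _
      _ ≤ volume (uIoc p.1 q.1) + volume (uIoc p.2 q.2) := by
          gcongr
          exacts [(Measure.le_map_apply measurable_fst.aemeasurable _).trans (hfst _),
            (Measure.le_map_apply measurable_snd.aemeasurable _).trans (hsnd _)]
      _ = _ := by
          rw [Real.volume_uIoc, Real.volume_uIoc, Real.dist_eq, Real.dist_eq, abs_sub_comm,
            abs_sub_comm p.2]
  calc dist (jointCDF ν p) (jointCDF ν q)
      ≤ ν.real ((Iic p.1 ×ˢ Iic p.2) ∆ (Iic q.1 ×ˢ Iic q.2)) :=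
        abs_measureReal_sub_le_measureReal_symmDiff
          (measurableSet_Iic.prod measurableSet_Iic).nullMeasurableSet
          (measurableSet_Iic.prod measurableSet_Iic).nullMeasurableSet
    _ ≤ dist p.1 q.1 + dist p.2 q.2 := by
      refine ENNReal.toReal_le_of_le_ofReal (by positivity) ?_
      rwa [ENNReal.ofReal_add dist_nonneg dist_nonneg]

theorem lipschitzWith_jointCDF [IsFiniteMeasure ν] (hfst : ν.map Prod.fst ≤ volume)
    (hsnd : ν.map Prod.snd ≤ volume) : LipschitzWith 2 (jointCDF ν) := by
  refine LipschitzWith.of_dist_le_mul fun p q => (dist_jointCDF_le hfst hsnd p q).trans ?_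
  rw [Prod.dist_eq]
  push_cast
  linarith [le_max_left (dist p.1 q.1) (dist p.2 q.2), le_max_right (dist p.1 q.1) (dist p.2 q.2)]

theorem measure_frontier_Iic_prod_Iic (hfst : ν.map Prod.fst ≤ volume)
    (hsnd : ν.map Prod.snd ≤ volume) (a b : ℝ) : ν (frontier (Iic a ×ˢ Iic b)) = 0 := by
  have hsub : frontier (Iic a ×ˢ Iic b) ⊆ Prod.fst ⁻¹' {a} ∪ Prod.snd ⁻¹' {b} := by
    rw [frontier_prod_eq, frontier_Iic, frontier_Iic, closure_Iic]
    rintro ⟨x, y⟩ (⟨-, hy⟩ | ⟨hx, -⟩) <;> simp_all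
  refine measure_mono_null hsub (measure_union_null ?_ ?_)
  · exact nonpos_iff_eq_zero.1 <| (Measure.le_map_apply measurable_fst.aemeasurable _).trans
      ((hfst _).trans_eq Real.volume_singleton)
  · exact nonpos_iff_eq_zero.1 <| (Measure.le_map_apply measurable_snd.aemeasurable _).trans
      ((hsnd _).trans_eq Real.volume_singleton)

end jointCDF

section WeakConvergence

variable {ι : Type*} {L : Filter ι} {μs : ι → ProbabilityMeasure (ℝ × ℝ)}
  {μ : ProbabilityMeasure (ℝ × ℝ)}

theorem tendsto_jointCDF_of_tendsto (hlim : Tendsto μs L (𝓝 μ))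
    (hfst : (μ : Measure (ℝ × ℝ)).map Prod.fst ≤ volume)
    (hsnd : (μ : Measure (ℝ × ℝ)).map Prod.snd ≤ volume) (p : ℝ × ℝ) :
    Tendsto (fun i => jointCDF (μs i) p) L (𝓝 (jointCDF μ p)) :=
  (ENNReal.tendsto_toReal (measure_ne_top _ _)).comp <|
    ProbabilityMeasure.tendsto_measure_of_null_frontier_of_tendsto' hlim
      (measure_frontier_Iic_prod_Iic hfst hsnd p.1 p.2)

theorem tendstoUniformlyOn_jointCDF_of_tendsto [L.NeBot] (hlim : Tendsto μs L (𝓝 μ))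
    (hfst : ∀ i, (μs i : Measure (ℝ × ℝ)).map Prod.fst ≤ volume)
    (hsnd : ∀ i, (μs i : Measure (ℝ × ℝ)).map Prod.snd ≤ volume) {K : Set (ℝ × ℝ)}
    (hK : IsCompact K) : TendstoUniformlyOn (fun i => jointCDF (μs i)) (jointCDF μ) L K := by
  have hfst_lim := ProbabilityMeasure.map_le_of_tendsto_of_forall_map_le hlim continuous_fst hfst
  have hsnd_lim := ProbabilityMeasure.map_le_of_tendsto_of_forall_map_le hlim continuous_snd hsnd
  have hequi : Equicontinuous fun i => jointCDF (μs i) :=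
    (LipschitzWith.uniformEquicontinuous _ 2
      fun i => lipschitzWith_jointCDF (hfst i) (hsnd i)).equicontinuous
  exact hK.tendstoUniformlyOn_of_equicontinuousOn (hequi.equicontinuousOn K)
    fun p _ => tendsto_jointCDF_of_tendsto hlim hfst_lim hsnd_lim p

end WeakConvergence

theorem uniform_conv_of_df_of_weak_conv_general
    (μs : ℕ → ProbabilityMeasure (ℝ × ℝ)) (μ : ProbabilityMeasure (ℝ × ℝ))
    (hfst : ∀ n, (μs n : Measure (ℝ × ℝ)).map Prod.fst = volume.restrict (Set.Icc (0:ℝ) 1))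
    (hsnd : ∀ n, (μs n : Measure (ℝ × ℝ)).map Prod.snd = volume.restrict (Set.Icc (0:ℝ) 1))
    (hweak : Filter.Tendsto μs Filter.atTop (nhds μ)) :
    TendstoUniformlyOn
      (fun n (p : ℝ × ℝ) => ((μs n : Measure (ℝ × ℝ)) (Set.Iic p.1 ×ˢ Set.Iic p.2)).toReal)
      (fun p => ((μ : Measure (ℝ × ℝ)) (Set.Iic p.1 ×ˢ Set.Iic p.2)).toReal)
      Filter.atTop (Set.Icc (0:ℝ) 1 ×ˢ Set.Icc (0:ℝ) 1) :=
  tendstoUniformlyOn_jointCDF_of_tendsto hweak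
    (fun n => (hfst n).trans_le Measure.restrict_le_self)
    (fun n => (hsnd n).trans_le Measure.restrict_le_self)
    (isCompact_Icc.prod isCompact_Icc)

/-- Let `μₙ` and `μ` be probability measures on `[0,1]²` (probability measures on `ℝ²`
living on the unit square), with each `μₙ` having uniform marginals. If `μₙ` converges
weakly to `μ`, then the joint distribution functions `Fₙ(x,y) = μₙ([0,x]×[0,y])`
converge uniformly on `[0,1]²` to `F(x,y) = μ([0,x]×[0,y])`. -/
theorem uniform_conv_of_df_of_weak_conv
    (μs : ℕ → ProbabilityMeasure (ℝ × ℝ)) (μ : ProbabilityMeasure (ℝ × ℝ))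
    (hfst : ∀ n, (μs n : Measure (ℝ × ℝ)).map Prod.fst = volume.restrict (Set.Icc (0:ℝ) 1))
    (hsnd : ∀ n, (μs n : Measure (ℝ × ℝ)).map Prod.snd = volume.restrict (Set.Icc (0:ℝ) 1))
    (hμ : (μ : Measure (ℝ × ℝ)) (Set.Icc (0:ℝ) 1 ×ˢ Set.Icc (0:ℝ) 1) = 1)
    (hweak : Filter.Tendsto μs Filter.atTop (nhds μ)) :
    TendstoUniformlyOn
      (fun n (p : ℝ × ℝ) => ((μs n : Measure (ℝ × ℝ)) (Set.Iic p.1 ×ˢ Set.Iic p.2)).toReal)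
      (fun p => ((μ : Measure (ℝ × ℝ)) (Set.Iic p.1 ×ˢ Set.Iic p.2)).toReal)
      Filter.atTop (Set.Icc (0:ℝ) 1 ×ˢ Set.Icc (0:ℝ) 1) :=
  uniform_conv_of_df_of_weak_conv_general μs μ hfst hsnd hweak
end

section
/- Let Z_1, Z_2 be limit permutations and (X_1,Y_1), (X_2,Y_2) their associated [0,1]²-valued random variables. Then d_□(Z_1,Z_2) = 0 if and only if (X_1,Y_1) and (X_2,Y_2) have the same distribution, which holds if and only if the set {x : Z_1(x,·) ≢ Z_2(x,·)} has Lebesgue measure zero. -/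
open MeasureTheory

/-- A limit permutation: a measurable `Z : [0,1]² → [0,1]` such that each `Z(x,·)` is a
cdf and `∫₀¹ Z(x,y) dx = y` for all `y ∈ [0,1]`. -/
def IsLimitPerm (Z : ℝ → ℝ → ℝ) : Prop :=
  Measurable (fun p : ℝ × ℝ => Z p.1 p.2) ∧
  (∀ x y, Z x y ∈ Set.Icc (0:ℝ) 1) ∧
  (∀ x, MonotoneOn (Z x) (Set.Icc (0:ℝ) 1)) ∧
  (∀ x, ∀ y ∈ Set.Ico (0:ℝ) 1, ContinuousWithinAt (Z x) (Set.Ici y) y) ∧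
  (∀ x, Z x 1 = 1) ∧
  (∀ y ∈ Set.Icc (0:ℝ) 1, ∫ x in Set.Icc (0:ℝ) 1, Z x y = y)

/-- The (generalized inverse) quantile function of the cdf `Z(x,·)`. -/
noncomputable def quantile (Z : ℝ → ℝ → ℝ) (x u : ℝ) : ℝ :=
  sInf {y | y ∈ Set.Icc (0:ℝ) 1 ∧ u ≤ Z x y}

/-- The distribution of the `[0,1]²`-valued random variable `(X,Y)` associated with a
limit permutation `Z`: `X` is uniform on `[0,1]` and, given `X = x`, `Y` has cdf
`Z(x,·)`. It is realized as the image of the uniform distribution on the unit square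
under `(x,u) ↦ (x, quantile Z x u)`. -/
noncomputable def assocMeasure (Z : ℝ → ℝ → ℝ) : Measure (ℝ × ℝ) :=
  Measure.map (fun p : ℝ × ℝ => (p.1, quantile Z p.1 p.2))
    (volume.restrict (Set.Icc (0:ℝ) 1 ×ˢ Set.Icc (0:ℝ) 1))

/-- The rectangular distance between two measures on the plane: the supremum over
axis-parallel rectangles of the difference of their measures. -/
noncomputable def dRect (μ ν : Measure (ℝ × ℝ)) : ℝ :=
  sSup {r : ℝ | ∃ x₁ x₂ y₁ y₂ : ℝ, x₁ ≤ x₂ ∧ y₁ ≤ y₂ ∧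
    r = |(μ (Set.Icc x₁ x₂ ×ˢ Set.Icc y₁ y₂)).toReal
          - (ν (Set.Icc x₁ x₂ ×ˢ Set.Icc y₁ y₂)).toReal|}

/-! Because `quantile Z x u ≤ b ↔ u ≤ Z x b`, the law of `(X, Y)` gives the rectangle `s × [0, b]`
the mass `∫_{s ∩ [0,1]} Z(x, b) dx`. Equal laws therefore force `Z₁(·, b) = Z₂(·, b)` almost
everywhere for each `b`, hence simultaneously for all rational `b`, and right-continuity of the
cdfs extends this to every `b`. Conversely, if the sections agree for almost every `x`, the
quantile maps pushing the uniform measure on the square forward agree almost everywhere. Finally,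
closed rectangles form a π-system generating the Borel sets of the plane, so `d_□` vanishes
exactly when two finite measures coincide. -/

open Set Filter Topology

section Quantile

variable {Z Z' : ℝ → ℝ → ℝ} {x u t : ℝ}

lemma quantile_nonneg : 0 ≤ quantile Z x u :=
  Real.sInf_nonneg fun _ hy => hy.1.1

lemma quantile_le_one : quantile Z x u ≤ 1 := by
  rcases eq_empty_or_nonempty {y | y ∈ Icc (0:ℝ) 1 ∧ u ≤ Z x y} with hS | ⟨y, hy⟩
  · rw [quantile, hS, Real.sInf_empty]
    exact zero_le_one
  · exact (csInf_le ⟨0, fun _ hz => hz.1.1⟩ hy).trans hy.1.2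

lemma quantile_eq_zero_of_lt (hmono : MonotoneOn (Z x) (Icc 0 1)) (hu : Z x 1 < u) :
    quantile Z x u = 0 := by
  have hS : {y | y ∈ Icc (0:ℝ) 1 ∧ u ≤ Z x y} = ∅ :=
    eq_empty_of_forall_notMem fun y ⟨hy, huy⟩ =>
      (huy.trans (hmono hy ⟨zero_le_one, le_rfl⟩ hy.2)).not_gt hu
  rw [quantile, hS, Real.sInf_empty]

lemma le_apply_quantile (hcont : ∀ y ∈ Ico (0:ℝ) 1, ContinuousWithinAt (Z x) (Ici y) y)
    (hu : u ≤ Z x 1) (hq : quantile Z x u < 1) : u ≤ Z x (quantile Z x u) := by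
  set S := {y | y ∈ Icc (0:ℝ) 1 ∧ u ≤ Z x y}
  have hbdd : BddBelow S := ⟨0, fun _ hy => hy.1.1⟩
  -- `quantile Z x u = sInf S` is approached from the right by points of `S`
  have : (𝓝[S] quantile Z x u).NeBot :=
    mem_closure_iff_nhdsWithin_neBot.1 (csInf_mem_closure ⟨1, ⟨zero_le_one, le_rfl⟩, hu⟩ hbdd)
  have hS : S ⊆ Ici (quantile Z x u) := fun _ hy => csInf_le hbdd hy
  exact ge_of_tendsto ((hcont _ ⟨quantile_nonneg, hq⟩).mono hS)
    (eventually_nhdsWithin_of_forall fun _ hy => hy.2)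

lemma quantile_le_iff (hmono : MonotoneOn (Z x) (Icc 0 1))
    (hcont : ∀ y ∈ Ico (0:ℝ) 1, ContinuousWithinAt (Z x) (Ici y) y)
    (hu : u ≤ Z x 1) (ht : t ∈ Icc (0:ℝ) 1) : quantile Z x u ≤ t ↔ u ≤ Z x t := by
  refine ⟨fun hle => ?_, fun hle => csInf_le ⟨0, fun _ hy => hy.1.1⟩ ⟨ht, hle⟩⟩
  rcases ht.2.eq_or_lt with rfl | ht1
  · exact hu
  · exact (le_apply_quantile hcont hu (hle.trans_lt ht1)).trans
      (hmono ⟨quantile_nonneg, quantile_le_one⟩ ht hle)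

lemma quantile_congr (h : EqOn (Z x) (Z' x) (Icc 0 1)) : quantile Z x = quantile Z' x := by
  ext u
  simp only [quantile]
  congr 1 with y
  exact and_congr_right fun hy => by rw [h hy]

end Quantile

namespace IsLimitPerm

variable {Z : ℝ → ℝ → ℝ}

lemma measurable_quantile (h : IsLimitPerm Z) :
    Measurable fun p : ℝ × ℝ => quantile Z p.1 p.2 := by
  obtain ⟨hmeas, -, hmono, hcont, hone, -⟩ := h
  refine measurable_of_Iic fun t => ?_
  rcases lt_or_ge t 0 with ht0 | ht0
  · convert MeasurableSet.empty
    ext p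
    simpa using ht0.trans_le quantile_nonneg
  rcases le_or_gt 1 t with ht1 | ht1
  · convert MeasurableSet.univ
    ext p
    simpa using quantile_le_one.trans ht1
  have hpre : (fun p : ℝ × ℝ => quantile Z p.1 p.2) ⁻¹' Iic t
      = {p | 1 < p.2} ∪ {p | p.2 ≤ Z p.1 t} := by
    ext ⟨x, u⟩
    rcases le_or_gt u 1 with hu | hu
    · simp [quantile_le_iff (hmono x) (hcont x) ((hone x).symm ▸ hu) ⟨ht0, ht1.le⟩, hu.not_gt]
    · simp [quantile_eq_zero_of_lt (hmono x) ((hone x).symm ▸ hu), ht0, hu]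
  rw [hpre]
  exact (measurableSet_lt measurable_const measurable_snd).union
    (measurableSet_le measurable_snd (hmeas.comp (measurable_fst.prodMk measurable_const)))

end IsLimitPerm

instance (Z : ℝ → ℝ → ℝ) : IsFiniteMeasure (assocMeasure Z) :=
  haveI : IsFiniteMeasure (volume.restrict (Icc (0:ℝ) 1 ×ˢ Icc (0:ℝ) 1)) :=
    isFiniteMeasure_restrict.2 (isCompact_Icc.prod isCompact_Icc).measure_lt_top.ne
  Measure.isFiniteMeasure_map _ _

lemma volume_restrict_unitSquare :
    volume.restrict (Icc (0:ℝ) 1 ×ˢ Icc (0:ℝ) 1)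
      = (volume.restrict (Icc (0:ℝ) 1)).prod (volume.restrict (Icc (0:ℝ) 1)) := by
  rw [Measure.volume_eq_prod, Measure.prod_restrict]

lemma assocMeasure_prod_Icc_zero {Z : ℝ → ℝ → ℝ} (h : IsLimitPerm Z) {s : Set ℝ}
    (hs : MeasurableSet s) {b : ℝ} (hb : b ∈ Icc (0:ℝ) 1) :
    assocMeasure Z (s ×ˢ Icc 0 b)
      = (volume.restrict (Icc 0 1)).withDensity (fun x => ENNReal.ofReal (Z x b)) s := by
  have hf : Measurable fun p : ℝ × ℝ => (p.1, quantile Z p.1 p.2) :=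
    measurable_fst.prodMk h.measurable_quantile
  obtain ⟨-, hrange, hmono, hcont, hone, -⟩ := h
  have hR : MeasurableSet (s ×ˢ Icc 0 b) := hs.prod measurableSet_Icc
  rw [assocMeasure, Measure.map_apply hf hR, volume_restrict_unitSquare,
    Measure.prod_apply (hf hR), withDensity_apply _ hs, ← lintegral_indicator hs]
  congr 1 with x
  by_cases hx : x ∈ s
  · have hslice : Prod.mk x ⁻¹' ((fun p : ℝ × ℝ => (p.1, quantile Z p.1 p.2)) ⁻¹' (s ×ˢ Icc 0 b))
        ∩ Icc 0 1 = Icc 0 (Z x b) := by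
      ext u
      simp only [mem_inter_iff, mem_preimage, mem_prod, hx, true_and, mem_Icc]
      have hq (hu : u ≤ 1) := quantile_le_iff (hmono x) (hcont x) ((hone x).symm ▸ hu) hb
      constructor
      · rintro ⟨⟨-, hqb⟩, hu0, hu1⟩
        exact ⟨hu0, (hq hu1).1 hqb⟩
      · rintro ⟨hu0, hub⟩
        have hu1 : u ≤ 1 := hub.trans (hrange x b).2
        exact ⟨⟨quantile_nonneg, (hq hu1).2 hub⟩, hu0, hu1⟩
    rw [indicator_of_mem hx, Measure.restrict_apply' measurableSet_Icc, hslice,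
      Real.volume_Icc, sub_zero]
  · rw [indicator_of_notMem hx]
    convert measure_empty (μ := volume.restrict (Icc (0:ℝ) 1))
    ext u
    simp [hx]

lemma ae_eq_apply_of_assocMeasure_eq {Z₁ Z₂ : ℝ → ℝ → ℝ} (h₁ : IsLimitPerm Z₁)
    (h₂ : IsLimitPerm Z₂) (heq : assocMeasure Z₁ = assocMeasure Z₂) {b : ℝ}
    (hb : b ∈ Icc (0:ℝ) 1) :
    (fun x => Z₁ x b) =ᵐ[volume.restrict (Icc 0 1)] fun x => Z₂ x b := by
  have hmeas {Z : ℝ → ℝ → ℝ} (h : IsLimitPerm Z) :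
      AEMeasurable (fun x => ENNReal.ofReal (Z x b)) (volume.restrict (Icc 0 1)) :=
    (ENNReal.measurable_ofReal.comp (h.1.comp (measurable_id.prodMk measurable_const))).aemeasurable
  have hdens : (volume.restrict (Icc 0 1)).withDensity (fun x => ENNReal.ofReal (Z₁ x b))
      = (volume.restrict (Icc 0 1)).withDensity (fun x => ENNReal.ofReal (Z₂ x b)) :=
    Measure.ext fun s hs => by
      rw [← assocMeasure_prod_Icc_zero h₁ hs hb, ← assocMeasure_prod_Icc_zero h₂ hs hb, heq]
  have hae := (withDensity_eq_iff_of_sigmaFinite (hmeas h₁) (hmeas h₂)).1 hdens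
  obtain ⟨-, hrange₁, -⟩ := h₁
  obtain ⟨-, hrange₂, -⟩ := h₂
  filter_upwards [hae] with x hx
  exact (ENNReal.ofReal_eq_ofReal_iff (hrange₁ x b).1 (hrange₂ x b).1).1 hx

lemma eqOn_Icc_of_forall_rat_eq {F G : ℝ → ℝ}
    (hF : ∀ y ∈ Ico (0:ℝ) 1, ContinuousWithinAt F (Ici y) y)
    (hG : ∀ y ∈ Ico (0:ℝ) 1, ContinuousWithinAt G (Ici y) y)
    (h : ∀ q : ℚ, (q : ℝ) ∈ Icc (0:ℝ) 1 → F q = G q) : EqOn F G (Icc 0 1) := by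
  intro y hy
  rcases hy.2.eq_or_lt with rfl | hy1
  · exact_mod_cast h 1 (by simp)
  set s := Ioo y 1 ∩ range ((↑) : ℚ → ℝ)
  have hys : y ∈ closure s := by
    have := closure_mono
      (Rat.denseRange_cast.open_subset_closure_inter (isOpen_Ioo (a := y) (b := 1)))
    rw [closure_closure, closure_Ioo hy1.ne] at this
    exact this ⟨le_rfl, hy1.le⟩
  have : (𝓝[s] y).NeBot := mem_closure_iff_nhdsWithin_neBot.1 hys
  have hsub : s ⊆ Ici y := fun z hz => hz.1.1.le
  refine tendsto_nhds_unique_of_eventuallyEq ((hF y ⟨hy.1, hy1⟩).mono hsub)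
    ((hG y ⟨hy.1, hy1⟩).mono hsub) (eventually_nhdsWithin_of_forall ?_)
  rintro _ ⟨hz, q, rfl⟩
  exact h q ⟨hy.1.trans hz.1.le, hz.2.le⟩

lemma ae_eqOn_of_assocMeasure_eq {Z₁ Z₂ : ℝ → ℝ → ℝ} (h₁ : IsLimitPerm Z₁)
    (h₂ : IsLimitPerm Z₂) (heq : assocMeasure Z₁ = assocMeasure Z₂) :
    ∀ᵐ x ∂volume.restrict (Icc (0:ℝ) 1), EqOn (Z₁ x) (Z₂ x) (Icc 0 1) := by
  have hrat : ∀ᵐ x ∂volume.restrict (Icc (0:ℝ) 1),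
      ∀ q : {q : ℚ // (q : ℝ) ∈ Icc (0:ℝ) 1}, Z₁ x q = Z₂ x q :=
    ae_all_iff.2 fun q => ae_eq_apply_of_assocMeasure_eq h₁ h₂ heq q.2
  obtain ⟨-, -, -, hcont₁, -⟩ := h₁
  obtain ⟨-, -, -, hcont₂, -⟩ := h₂
  filter_upwards [hrat] with x hx
  exact eqOn_Icc_of_forall_rat_eq (hcont₁ x) (hcont₂ x) fun q hq => hx ⟨q, hq⟩

lemma assocMeasure_congr {Z₁ Z₂ : ℝ → ℝ → ℝ}
    (h : ∀ᵐ x ∂volume.restrict (Icc (0:ℝ) 1), EqOn (Z₁ x) (Z₂ x) (Icc 0 1)) :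
    assocMeasure Z₁ = assocMeasure Z₂ := by
  refine Measure.map_congr ?_
  rw [volume_restrict_unitSquare]
  filter_upwards [Measure.quasiMeasurePreserving_fst.ae h] with p hp
  rw [quantile_congr hp]

lemma assocMeasure_eq_iff {Z₁ Z₂ : ℝ → ℝ → ℝ} (h₁ : IsLimitPerm Z₁) (h₂ : IsLimitPerm Z₂) :
    assocMeasure Z₁ = assocMeasure Z₂ ↔
      ∀ᵐ x ∂volume.restrict (Icc (0:ℝ) 1), EqOn (Z₁ x) (Z₂ x) (Icc 0 1) :=
  ⟨ae_eqOn_of_assocMeasure_eq h₁ h₂, assocMeasure_congr⟩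

lemma MeasureTheory.Measure.ext_of_Icc_prod_Icc {μ ν : Measure (ℝ × ℝ)} [IsFiniteMeasure μ]
    (h : ∀ ⦃x₁ x₂ y₁ y₂ : ℝ⦄, x₁ ≤ x₂ → y₁ ≤ y₂ →
      μ (Icc x₁ x₂ ×ˢ Icc y₁ y₂) = ν (Icc x₁ x₂ ×ˢ Icc y₁ y₂)) :
    μ = ν := by
  set C : Set (Set ℝ) := {S | ∃ l u, l ≤ u ∧ Icc l u = S}
  have hball (n : ℕ) : Icc (-n : ℝ) n ∈ C := ⟨_, _, by linarith [n.cast_nonneg (α := ℝ)], rfl⟩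
  have hmono : Monotone fun n : ℕ => Icc (-n : ℝ) n := fun m n hmn =>
    Icc_subset_Icc (by simpa using hmn) (by simpa using hmn)
  have hcover : ⋃ n : ℕ, Icc (-n : ℝ) n = univ :=
    eq_univ_of_forall fun x => mem_iUnion.2 ⟨⌈|x|⌉₊, abs_le.1 (Nat.le_ceil _)⟩
  have hC : IsCountablySpanning C := ⟨_, hball, hcover⟩
  refine Measure.ext_of_generateFrom_of_iUnion (image2 (· ×ˢ ·) C C)
    (fun n : ℕ => Icc (-n : ℝ) n ×ˢ Icc (-n : ℝ) n) ?_
    ((isPiSystem_Icc id id).prod (isPiSystem_Icc id id))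
    (by rw [iUnion_prod_of_monotone hmono hmono, hcover, univ_prod_univ])
    (fun n => mem_image2_of_mem (hball n) (hball n)) (fun _ => measure_ne_top _ _) ?_
  · rw [← generateFrom_prod_eq hC hC, ← borel_eq_generateFrom_Icc, ← BorelSpace.measurable_eq]
  · rintro _ ⟨_, ⟨x₁, x₂, hx, rfl⟩, _, ⟨y₁, y₂, hy, rfl⟩, rfl⟩
    exact h hx hy

lemma dRect_eq_zero_iff {μ ν : Measure (ℝ × ℝ)} [IsFiniteMeasure μ] [IsFiniteMeasure ν] :
    dRect μ ν = 0 ↔ μ = ν := by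
  constructor
  · intro h
    refine Measure.ext_of_Icc_prod_Icc fun x₁ x₂ y₁ y₂ hx hy => ?_
    have hbdd : BddAbove {r : ℝ | ∃ x₁ x₂ y₁ y₂ : ℝ, x₁ ≤ x₂ ∧ y₁ ≤ y₂ ∧
        r = |(μ (Icc x₁ x₂ ×ˢ Icc y₁ y₂)).toReal - (ν (Icc x₁ x₂ ×ˢ Icc y₁ y₂)).toReal|} := by
      refine ⟨(μ univ).toReal + (ν univ).toReal, ?_⟩
      rintro _ ⟨x₁, x₂, y₁, y₂, -, -, rfl⟩
      refine (abs_sub _ _).trans ?_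
      rw [abs_of_nonneg ENNReal.toReal_nonneg, abs_of_nonneg ENNReal.toReal_nonneg]
      exact add_le_add (ENNReal.toReal_mono (measure_ne_top _ _) (measure_mono (subset_univ _)))
        (ENNReal.toReal_mono (measure_ne_top _ _) (measure_mono (subset_univ _)))
    have hle := le_csSup hbdd ⟨x₁, x₂, y₁, y₂, hx, hy, rfl⟩
    rw [← dRect, h, abs_nonpos_iff, sub_eq_zero] at hle
    exact (ENNReal.toReal_eq_toReal_iff' (measure_ne_top _ _) (measure_ne_top _ _)).1 hle
  · rintro rfl
    simp [dRect, show ∃ a b : ℝ, a ≤ b from ⟨0, 0, le_rfl⟩]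

/-- For limit permutations `Z₁, Z₂` with associated random variables `(X₁,Y₁)`,
`(X₂,Y₂)`: `d_□(Z₁,Z₂) = 0` iff `(X₁,Y₁) ∼ (X₂,Y₂)`, which holds iff
`{x : Z₁(x,·) ≢ Z₂(x,·)}` has Lebesgue measure zero. -/
theorem dRect_eq_zero_iff_same_distribution_iff_ae_eq
    (Z₁ Z₂ : ℝ → ℝ → ℝ) (h₁ : IsLimitPerm Z₁) (h₂ : IsLimitPerm Z₂) :
    (dRect (assocMeasure Z₁) (assocMeasure Z₂) = 0 ↔ assocMeasure Z₁ = assocMeasure Z₂) ∧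
    (assocMeasure Z₁ = assocMeasure Z₂ ↔
      volume {x ∈ Set.Icc (0:ℝ) 1 | ∃ y ∈ Set.Icc (0:ℝ) 1, Z₁ x y ≠ Z₂ x y} = 0) := by
  refine ⟨dRect_eq_zero_iff, ?_⟩
  rw [assocMeasure_eq_iff h₁ h₂, ae_restrict_iff' measurableSet_Icc, ae_iff]
  simp only [EqOn, Classical.not_imp, not_forall]
end
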